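/- arXiv:2506.12534 — 3 statements merged into one kernel-verified Lean document; each statement's English description precedes it below -/
import Mathlib

section
/- Let n ≥ 1, E = EuclideanSpace ℝ (Fin n), and μ a Borel probability measure on E satisfying the standing integrability assumption. Let σ > 0, A : E ≃ₗᵢ[ℝ] E a linear isometric equivalence, b ∈ E, and g : E → E the σ-scaled isometry g(x) = σ • A x + b. Then for every u ∈ E with ‖u‖ < 1, the (A u)-quantile set of the pushforward measure μ.map g equals the image under g of the u-quantile set of μ: argmin_{p∈E} ∫ ρ_{A u}(y, p) d(μ.map g)(y) = g '' (argmin_{p∈E} ∫ ρ_u(x, p) dμ(x)). (Euclidean case of Proposition 2.2: equivariance of quantile sets under scaled isometries.) -/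
/-!
The loss is equivariant: `ρ_{A u}(g x, g p) = σ ρ_u(x, p)`, because `g p - g x = σ • A (p - x)` and `A`
preserves norms and inner products. By change of variables along the homeomorphism `g`, the objective
of `μ.map g` at `g p` is therefore `σ` times the objective of `μ` at `p`, and a positive multiple
of a function transported along a bijection has the transported set of minimizers.
The identity of objectives holds without integrability, since `∫ σ * f = σ * ∫ f` also when both
sides take the junk value `0`.
-/

open MeasureTheory

/-- The data-based geometric quantile loss in Euclidean space:
`ρ_u(x,p) = ‖p − x‖ − ⟪u, p − x⟫`. -/
noncomputable def quantileLoss {n : ℕ} (u x p : EuclideanSpace ℝ (Fin n)) : ℝ :=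
  ‖p - x‖ - inner ℝ u (p - x)

def minimizers {α : Type*} (F : α → ℝ) : Set α :=
  {q | ∀ p, F q ≤ F p}

theorem minimizers_eq_image_of_comp_eq_mul {α β : Type*} (e : α ≃ β) {F : β → ℝ} {G : α → ℝ}
    {σ : ℝ} (hσ : 0 < σ) (hFG : ∀ x, F (e x) = σ * G x) :
    minimizers F = e '' minimizers G := by
  ext q
  obtain ⟨x, rfl⟩ := e.surjective q
  simp only [minimizers, Set.mem_ofPred_eq, e.injective.mem_set_image, ← e.forall_congr_right,
    hFG, mul_le_mul_iff_right₀ hσ]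

noncomputable def scaledIsometry {E : Type*} [NormedAddCommGroup E] [NormedSpace ℝ E]
    (σ : ℝ) (hσ : σ ≠ 0) (A : E ≃ₗᵢ[ℝ] E) (b : E) : E ≃ₜ E :=
  (A.toHomeomorph.trans (Homeomorph.smulOfNeZero σ hσ)).trans (Homeomorph.addRight b)

@[simp]
theorem scaledIsometry_apply {E : Type*} [NormedAddCommGroup E] [NormedSpace ℝ E]
    (σ : ℝ) (hσ : σ ≠ 0) (A : E ≃ₗᵢ[ℝ] E) (b x : E) :
    scaledIsometry σ hσ A b x = σ • A x + b :=
  rfl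

section Euclidean

variable {n : ℕ}

theorem quantileLoss_smul_map_add {σ : ℝ} (hσ : 0 ≤ σ)
    (A : EuclideanSpace ℝ (Fin n) ≃ₗᵢ[ℝ] EuclideanSpace ℝ (Fin n))
    (b u x p : EuclideanSpace ℝ (Fin n)) :
    quantileLoss (A u) (σ • A x + b) (σ • A p + b) = σ * quantileLoss u x p := by
  have hdiff : σ • A p + b - (σ • A x + b) = σ • A (p - x) := by
    rw [map_sub, smul_sub, add_sub_add_right_eq_sub]
  rw [quantileLoss, quantileLoss, hdiff, norm_smul, Real.norm_of_nonneg hσ, A.norm_map,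
    real_inner_smul_right, A.inner_map_map, mul_sub]

theorem integral_quantileLoss_map_scaledIsometry (μ : Measure (EuclideanSpace ℝ (Fin n)))
    {σ : ℝ} (hσ : 0 < σ) (A : EuclideanSpace ℝ (Fin n) ≃ₗᵢ[ℝ] EuclideanSpace ℝ (Fin n))
    (b u p : EuclideanSpace ℝ (Fin n)) :
    ∫ y, quantileLoss (A u) y (scaledIsometry σ hσ.ne' A b p)
        ∂(μ.map (scaledIsometry σ hσ.ne' A b))
      = σ * ∫ x, quantileLoss u x p ∂μ := by
  rw [(scaledIsometry σ hσ.ne' A b).measurableEmbedding.integral_map, ← integral_const_mul]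
  simp only [scaledIsometry_apply, quantileLoss_smul_map_add hσ.le]

end Euclidean

theorem quantile_set_equivariant_scaled_isometry_general
    {n : ℕ}
    (μ : Measure (EuclideanSpace ℝ (Fin n)))
    (σ : ℝ) (hσ : 0 < σ)
    (A : EuclideanSpace ℝ (Fin n) ≃ₗᵢ[ℝ] EuclideanSpace ℝ (Fin n))
    (b : EuclideanSpace ℝ (Fin n))
    (g : EuclideanSpace ℝ (Fin n) → EuclideanSpace ℝ (Fin n))
    (hg : ∀ x, g x = σ • A x + b)
    (u : EuclideanSpace ℝ (Fin n)) :
    {q | ∀ p, ∫ y, quantileLoss (A u) y q ∂(μ.map g) ≤ ∫ y, quantileLoss (A u) y p ∂(μ.map g)}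
      = g '' {q | ∀ p, ∫ x, quantileLoss u x q ∂μ ≤ ∫ x, quantileLoss u x p ∂μ} := by
  obtain rfl : g = scaledIsometry σ hσ.ne' A b := funext hg
  exact minimizers_eq_image_of_comp_eq_mul (scaledIsometry σ hσ.ne' A b).toEquiv hσ
    (integral_quantileLoss_map_scaledIsometry μ hσ A b u)

/-- Euclidean case of Proposition 2.2: equivariance of data-based quantile sets under
σ-scaled isometries `g(x) = σ • A x + b`. -/
theorem quantile_set_equivariant_scaled_isometry
    {n : ℕ} (hn : 1 ≤ n)
    (μ : Measure (EuclideanSpace ℝ (Fin n))) [IsProbabilityMeasure μ]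
    (hμint : ∃ (u₀ p₀ : EuclideanSpace ℝ (Fin n)), ‖u₀‖ < 1 ∧
      Integrable (fun x => quantileLoss u₀ x p₀) μ)
    (σ : ℝ) (hσ : 0 < σ)
    (A : EuclideanSpace ℝ (Fin n) ≃ₗᵢ[ℝ] EuclideanSpace ℝ (Fin n))
    (b : EuclideanSpace ℝ (Fin n))
    (g : EuclideanSpace ℝ (Fin n) → EuclideanSpace ℝ (Fin n))
    (hg : ∀ x, g x = σ • A x + b)
    (u : EuclideanSpace ℝ (Fin n)) (hu : ‖u‖ < 1) :
    {q | ∀ p, ∫ y, quantileLoss (A u) y q ∂(μ.map g) ≤ ∫ y, quantileLoss (A u) y p ∂(μ.map g)}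
      = g '' {q | ∀ p, ∫ x, quantileLoss u x q ∂μ ≤ ∫ x, quantileLoss u x p ∂μ} :=
  quantile_set_equivariant_scaled_isometry_general μ σ hσ A b g hg u
end

section
/- Let E = EuclideanSpace ℝ (Fin n) and μ a Borel probability measure on E. Suppose there exist u₀ ∈ E with ‖u₀‖ < 1 and p₀ ∈ E such that x ↦ ρ_{u₀}(x, p₀) is μ-integrable. Then for every u ∈ E (with no restriction on ‖u‖) and every p ∈ E, the function x ↦ ρ_u(x, p) is μ-integrable, and the function G_u : p ↦ ∫ ρ_u(x, p) dμ(x) is continuous on E. (Euclidean case of Proposition 2.4(a).) -/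
/-!
Since `⟪u₀, v⟫ ≤ ‖u₀‖ ‖v‖` and `‖u₀‖ < 1`, the loss `ρ_{u₀}(·, p₀)` dominates
`(1 - ‖u₀‖) ‖p₀ - ·‖`, so `μ` has a finite first moment. For every `u`, the loss `ρ_u(x, p)`
is `(1 + ‖u‖)`-Lipschitz in `x` and in `p`: the first gives integrability against a measure
with finite first moment, the second makes `G_u` Lipschitz, hence continuous.
-/

open MeasureTheory Filter Topology

theorem lipschitzWith_norm_sub_inner {E : Type*} [NormedAddCommGroup E] [InnerProductSpace ℝ E]
    (u : E) : LipschitzWith (1 + ‖u‖₊) fun v : E => ‖v‖ - inner ℝ u v := by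
  have hnorm : ‖innerSL ℝ u‖₊ = ‖u‖₊ := NNReal.eq (innerSL_apply_norm ℝ u)
  simpa [hnorm] using lipschitzWith_one_norm.sub (innerSL ℝ u).lipschitz

theorem LipschitzWith.integrable_of_integrable_dist {α : Type*} [PseudoMetricSpace α]
    [MeasurableSpace α] [OpensMeasurableSpace α] {μ : Measure α} [IsFiniteMeasure μ]
    {K : NNReal} {g : α → ℝ} (hg : LipschitzWith K g) (x₀ : α)
    (h : Integrable (fun x => dist x x₀) μ) : Integrable g μ := by
  refine ((integrable_const ‖g x₀‖).add (h.const_mul K)).mono'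
    hg.continuous.aestronglyMeasurable (ae_of_all _ fun x => ?_)
  calc ‖g x‖ ≤ ‖g x₀‖ + dist (g x) (g x₀) := by
        rw [dist_eq_norm]; exact norm_le_norm_add_norm_sub' _ _
    _ ≤ ‖g x₀‖ + K * dist x x₀ := by gcongr; exact hg.dist_le_mul x x₀

theorem LipschitzWith.integral {X α E : Type*} [PseudoMetricSpace X] [MeasurableSpace α]
    [NormedAddCommGroup E] [NormedSpace ℝ E] {μ : Measure α} [IsFiniteMeasure μ]
    {K : NNReal} {F : X → α → E} (hF : ∀ a, LipschitzWith K fun p => F p a)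
    (hint : ∀ p, Integrable (F p) μ) :
    LipschitzWith (K * (μ Set.univ).toNNReal) fun p => ∫ a, F p a ∂μ := by
  refine LipschitzWith.of_dist_le_mul fun p q => ?_
  rw [dist_eq_norm, ← integral_sub (hint p) (hint q), NNReal.coe_mul, mul_right_comm]
  refine norm_integral_le_of_norm_le_const (ae_of_all _ fun a => ?_)
  rw [← dist_eq_norm]
  exact (hF a).dist_le_mul p q

section

variable {n : ℕ}

theorem lipschitzWith_quantileLoss (u x : EuclideanSpace ℝ (Fin n)) :
    LipschitzWith (1 + ‖u‖₊) (quantileLoss u x) := by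
  have h := (lipschitzWith_norm_sub_inner u).comp (IsometryEquiv.subRight x).isometry.lipschitz
  rw [mul_one] at h
  exact h

theorem lipschitzWith_quantileLoss_data (u p : EuclideanSpace ℝ (Fin n)) :
    LipschitzWith (1 + ‖u‖₊) fun x => quantileLoss u x p := by
  have h := (lipschitzWith_norm_sub_inner u).comp (IsometryEquiv.subLeft p).isometry.lipschitz
  rw [mul_one] at h
  exact h

theorem mul_norm_sub_le_quantileLoss (u x p : EuclideanSpace ℝ (Fin n)) :
    (1 - ‖u‖) * ‖p - x‖ ≤ quantileLoss u x p := by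
  have := real_inner_le_norm u (p - x)
  rw [quantileLoss]; linarith

theorem integrable_dist_of_integrable_quantileLoss {μ : Measure (EuclideanSpace ℝ (Fin n))}
    [IsFiniteMeasure μ] {u₀ p₀ : EuclideanSpace ℝ (Fin n)} (hu₀ : ‖u₀‖ < 1)
    (hint : Integrable (fun x => quantileLoss u₀ x p₀) μ) :
    Integrable (fun x => dist x p₀) μ := by
  have hc : 0 < 1 - ‖u₀‖ := sub_pos.mpr hu₀
  refine (hint.const_mul (1 - ‖u₀‖)⁻¹).mono'
    (continuous_id.dist continuous_const).aestronglyMeasurable (ae_of_all _ fun x => ?_)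
  rw [Real.norm_of_nonneg dist_nonneg, dist_comm, dist_eq_norm, ← div_eq_inv_mul,
    le_div_iff₀ hc, mul_comm]
  exact mul_norm_sub_le_quantileLoss u₀ x p₀

end

/-- Euclidean case of Proposition 2.4(a): under the standing integrability assumption,
for every `u` the loss is integrable at every `p`, and the population loss
`G_u(p) = ∫ ρ_u(x,p) dμ(x)` is continuous on all of `E`. -/
theorem integrable_and_continuous_quantileObjective
    {n : ℕ} (μ : Measure (EuclideanSpace ℝ (Fin n))) [IsProbabilityMeasure μ]
    (hμint : ∃ (u₀ p₀ : EuclideanSpace ℝ (Fin n)), ‖u₀‖ < 1 ∧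
      Integrable (fun x => quantileLoss u₀ x p₀) μ) :
    ∀ u : EuclideanSpace ℝ (Fin n),
      (∀ p : EuclideanSpace ℝ (Fin n), Integrable (fun x => quantileLoss u x p) μ) ∧
      Continuous (fun p : EuclideanSpace ℝ (Fin n) => ∫ x, quantileLoss u x p ∂μ) := by
  obtain ⟨u₀, p₀, hu₀, hint⟩ := hμint
  have hmoment := integrable_dist_of_integrable_quantileLoss hu₀ hint
  intro u
  have hint_all : ∀ p, Integrable (fun x => quantileLoss u x p) μ := fun p =>
    (lipschitzWith_quantileLoss_data u p).integrable_of_integrable_dist p₀ hmoment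
  exact ⟨hint_all, (LipschitzWith.integral (lipschitzWith_quantileLoss u) hint_all).continuous⟩
end

section
/- Let E = EuclideanSpace ℝ (Fin n) with n ≥ 1, N ≥ 1, u ∈ E with β := ‖u‖ < 1, and let N'' be a natural number with N'' ≤ N and N'' > (1 − β)N/2. Let T : (Fin N → E) → E be any sample u-quantile function, i.e., for every sample z : Fin N → E, T(z) is a minimizer of the empirical loss p ↦ (1/N) ∑_i ρ_u(z_i, p). Then for every sample X : Fin N → E and every C > 0 there exists a sample Y : Fin N → E with card {i : Y_i ≠ X_i} ≤ N'' and ‖T(X) − T(Y)‖ > C. (Euclidean content of Theorem 5.1(a)–(b), upper bound: corrupting any number of points exceeding (1 − β)N/2 breaks down every sample u-quantile function; combined with the lower bound this determines the breakdown point ⌈(1 − β)N/2⌉/N when (1 − β)N/2 ∉ ℤ.) -/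
/-!
Push `N''` sample points to `M • v`, far out along the unit vector `v` aligned with `u`.
Comparing the empirical loss of the corrupted quantile `p` with that of the point `M • v`:
each corrupted point costs at least `(1 + β)(M - ‖p‖)` at `p` and nothing at `M • v`, while
each remaining point `X i` costs at most `(1 - β) M + (1 + β) ‖X i‖` at `M • v`. Hence
`N''(1 + β) ‖p‖ ≥ (2N'' - (1 - β)N) M - (1 + β) ∑ ‖X i‖`, and the slope is positive exactly when
`N'' > (1 - β)N/2`, so `‖p‖ → ∞` as `M → ∞`.
-/

open MeasureTheory Filter Topology

open Finset

theorem exists_norm_eq_one_inner_eq_norm {F : Type*} [NormedAddCommGroup F]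
    [InnerProductSpace ℝ F] [Nontrivial F] (u : F) :
    ∃ v : F, ‖v‖ = 1 ∧ inner ℝ u v = ‖u‖ := by
  rcases eq_or_ne u 0 with rfl | hu
  · obtain ⟨w, hw⟩ := exists_ne (0 : F)
    exact ⟨‖w‖⁻¹ • w, norm_smul_inv_norm (𝕜 := ℝ) hw, by simp⟩
  · refine ⟨‖u‖⁻¹ • u, norm_smul_inv_norm (𝕜 := ℝ) hu, ?_⟩
    rw [real_inner_smul_right, real_inner_self_eq_norm_sq, sq, ← mul_assoc,
      inv_mul_cancel₀ (norm_ne_zero_iff.mpr hu), one_mul]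

theorem ncard_setOf_piecewise_ne_le {ι α : Type*} [DecidableEq ι] (S : Finset ι)
    (f g : ι → α) : {i | S.piecewise f g i ≠ g i}.ncard ≤ #S := by
  rw [← Set.ncard_coe_finset S]
  refine Set.ncard_le_ncard (fun i hi ↦ ?_) S.finite_toSet
  by_contra hiS
  exact hi (S.piecewise_eq_of_notMem f g hiS)

section QuantileLoss

variable {n : ℕ} {u : EuclideanSpace ℝ (Fin n)}

theorem quantileLoss_self (u x : EuclideanSpace ℝ (Fin n)) : quantileLoss u x x = 0 := by
  simp [quantileLoss]

theorem quantileLoss_nonneg (hu : ‖u‖ ≤ 1) (x p : EuclideanSpace ℝ (Fin n)) :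
    0 ≤ quantileLoss u x p := by
  have := real_inner_le_norm u (p - x)
  unfold quantileLoss
  nlinarith [norm_nonneg (p - x)]

variable {w : EuclideanSpace ℝ (Fin n)}

theorem le_quantileLoss_of_inner_eq (hw : inner ℝ u w = ‖u‖ * ‖w‖)
    (p : EuclideanSpace ℝ (Fin n)) : (1 + ‖u‖) * (‖w‖ - ‖p‖) ≤ quantileLoss u w p := by
  have := real_inner_le_norm u p
  have := norm_sub_norm_le w p
  unfold quantileLoss
  rw [inner_sub_right, hw, norm_sub_rev]
  nlinarith [norm_nonneg u]

theorem quantileLoss_le_of_inner_eq (hw : inner ℝ u w = ‖u‖ * ‖w‖)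
    (x : EuclideanSpace ℝ (Fin n)) :
    quantileLoss u x w ≤ (1 - ‖u‖) * ‖w‖ + (1 + ‖u‖) * ‖x‖ := by
  have := real_inner_le_norm u x
  have := norm_sub_le w x
  unfold quantileLoss
  rw [inner_sub_right, hw]
  linarith

variable {ι : Type*} [Fintype ι] [DecidableEq ι]

theorem sum_quantileLoss_piecewise (S : Finset ι) (X : ι → EuclideanSpace ℝ (Fin n))
    (p : EuclideanSpace ℝ (Fin n)) :
    ∑ i, quantileLoss u (S.piecewise (fun _ ↦ w) X i) p
      = #S * quantileLoss u w p + ∑ i ∈ Sᶜ, quantileLoss u (X i) p := by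
  rw [← sum_add_sum_compl S, ← nsmul_eq_mul, ← sum_const]
  congr 1
  · exact sum_congr rfl fun i hi ↦ by rw [S.piecewise_eq_of_mem _ _ hi]
  · exact sum_congr rfl fun i hi ↦ by rw [S.piecewise_eq_of_notMem _ _ (mem_compl.1 hi)]

theorem card_mul_le_of_sum_quantileLoss_piecewise_le (hu : ‖u‖ ≤ 1)
    (hw : inner ℝ u w = ‖u‖ * ‖w‖) (S : Finset ι) (X : ι → EuclideanSpace ℝ (Fin n))
    {p : EuclideanSpace ℝ (Fin n)}
    (hp : ∑ i, quantileLoss u (S.piecewise (fun _ ↦ w) X i) p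
      ≤ ∑ i, quantileLoss u (S.piecewise (fun _ ↦ w) X i) w) :
    #S * ((1 + ‖u‖) * (‖w‖ - ‖p‖))
      ≤ #Sᶜ * ((1 - ‖u‖) * ‖w‖) + (1 + ‖u‖) * ∑ i, ‖X i‖ := by
  rw [sum_quantileLoss_piecewise, sum_quantileLoss_piecewise, quantileLoss_self,
    mul_zero, zero_add] at hp
  have hfar : #S * ((1 + ‖u‖) * (‖w‖ - ‖p‖)) ≤ #S * quantileLoss u w p :=
    mul_le_mul_of_nonneg_left (le_quantileLoss_of_inner_eq hw p) (Nat.cast_nonneg _)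
  have hrest : 0 ≤ ∑ i ∈ Sᶜ, quantileLoss u (X i) p :=
    sum_nonneg fun i _ ↦ quantileLoss_nonneg hu _ _
  have hclean : ∑ i ∈ Sᶜ, quantileLoss u (X i) w
      ≤ #Sᶜ * ((1 - ‖u‖) * ‖w‖) + (1 + ‖u‖) * ∑ i, ‖X i‖ :=
    calc ∑ i ∈ Sᶜ, quantileLoss u (X i) w
        ≤ ∑ i ∈ Sᶜ, ((1 - ‖u‖) * ‖w‖ + (1 + ‖u‖) * ‖X i‖) :=
          sum_le_sum fun i _ ↦ quantileLoss_le_of_inner_eq hw _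
      _ = #Sᶜ * ((1 - ‖u‖) * ‖w‖) + (1 + ‖u‖) * ∑ i ∈ Sᶜ, ‖X i‖ := by
          rw [sum_add_distrib, sum_const, nsmul_eq_mul, mul_sum]
      _ ≤ #Sᶜ * ((1 - ‖u‖) * ‖w‖) + (1 + ‖u‖) * ∑ i, ‖X i‖ := by
          gcongr
          exact subset_univ _
  linarith

theorem tendsto_norm_of_sum_quantileLoss_piecewise_le (hu : ‖u‖ < 1) (S : Finset ι)
    (hS : (1 - ‖u‖) * Fintype.card ι < 2 * #S) (X : ι → EuclideanSpace ℝ (Fin n))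
    {v : EuclideanSpace ℝ (Fin n)} (hv : ‖v‖ = 1) (huv : inner ℝ u v = ‖u‖)
    (p : ℝ → EuclideanSpace ℝ (Fin n))
    (hp : ∀ M, ∑ i, quantileLoss u (S.piecewise (fun _ ↦ M • v) X i) (p M)
      ≤ ∑ i, quantileLoss u (S.piecewise (fun _ ↦ M • v) X i) (M • v)) :
    Tendsto (fun M ↦ ‖p M‖) atTop atTop := by
  set δ : ℝ := 2 * #S - (1 - ‖u‖) * Fintype.card ι with hδ
  have hcard : (#S + #Sᶜ : ℝ) = Fintype.card ι := by exact_mod_cast card_add_card_compl S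
  have hS0 : (0 : ℝ) < #S := by
    linarith [mul_nonneg (sub_nonneg.2 hu.le) (Nat.cast_nonneg (α := ℝ) (Fintype.card ι))]
  have hd : 0 < #S * (1 + ‖u‖) := by positivity
  have hlower : ∀ M : ℝ, 0 ≤ M →
      (δ * M - (1 + ‖u‖) * ∑ i, ‖X i‖) / (#S * (1 + ‖u‖)) ≤ ‖p M‖ := by
    intro M hM
    have hMv : ‖M • v‖ = M := by rw [norm_smul, hv, Real.norm_of_nonneg hM, mul_one]
    have hw : inner ℝ u (M • v) = ‖u‖ * ‖M • v‖ := by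
      rw [real_inner_smul_right, huv, hMv, mul_comm]
    have := card_mul_le_of_sum_quantileLoss_piecewise_le hu.le hw S X (hp M)
    rw [hMv] at this
    rw [div_le_iff₀ hd, hδ, ← hcard]
    linarith
  refine tendsto_atTop_mono' _ (eventually_ge_atTop 0 |>.mono hlower) ?_
  refine (tendsto_atTop_add_const_right _ _ ?_).atTop_div_const hd
  exact tendsto_id.const_mul_atTop (by linarith)

end QuantileLoss

/-- Euclidean content of Theorem 5.1(a)–(b), upper bound: if `N'' > (1 − β)N/2` points
may be corrupted, then every sample `u`-quantile function breaks down: at every sample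
the corrupted quantile can be moved arbitrarily far. -/
theorem sample_quantile_breakdown_upper_bound
    {n : ℕ} (hn : 1 ≤ n) (N : ℕ) (hN : 1 ≤ N)
    (u : EuclideanSpace ℝ (Fin n)) (β : ℝ) (hβ : β = ‖u‖) (hu : β < 1)
    (N'' : ℕ) (hN''le : N'' ≤ N) (hN''gt : (1 - β) * N / 2 < (N'' : ℝ))
    (T : (Fin N → EuclideanSpace ℝ (Fin n)) → EuclideanSpace ℝ (Fin n))
    (hT : ∀ z : Fin N → EuclideanSpace ℝ (Fin n), ∀ p : EuclideanSpace ℝ (Fin n),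
      (N : ℝ)⁻¹ * ∑ i, quantileLoss u (z i) (T z)
        ≤ (N : ℝ)⁻¹ * ∑ i, quantileLoss u (z i) p) :
    ∀ X : Fin N → EuclideanSpace ℝ (Fin n), ∀ C : ℝ, 0 < C →
      ∃ Y : Fin N → EuclideanSpace ℝ (Fin n),
        Set.ncard {i : Fin N | Y i ≠ X i} ≤ N'' ∧ C < ‖T X - T Y‖ := by
  intro X C _
  subst hβ
  have : Nonempty (Fin n) := ⟨⟨0, hn⟩⟩
  obtain ⟨v, hv, huv⟩ := exists_norm_eq_one_inner_eq_norm u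
  obtain ⟨S, -, hS⟩ := exists_subset_card_eq (s := (univ : Finset (Fin N))) (by simpa)
  set Y : ℝ → Fin N → EuclideanSpace ℝ (Fin n) := fun M ↦ S.piecewise (fun _ ↦ M • v) X
  have hmin : ∀ M,
      ∑ i, quantileLoss u (Y M i) (T (Y M)) ≤ ∑ i, quantileLoss u (Y M i) (M • v) :=
    fun M ↦ le_of_mul_le_mul_left (hT _ _) (inv_pos.2 (Nat.cast_pos.2 hN))
  have hfar := tendsto_norm_of_sum_quantileLoss_piecewise_le hu S
    (by rw [hS, Fintype.card_fin]; linarith) X hv huv _ hmin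
  obtain ⟨M, hM⟩ := (hfar.eventually_gt_atTop (‖T X‖ + C)).exists
  refine ⟨Y M, hS ▸ ncard_setOf_piecewise_ne_le S _ X, ?_⟩
  linarith [norm_sub_norm_le (T (Y M)) (T X), norm_sub_rev (T X) (T (Y M))]
end
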